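/- arXiv:2401.00164 — 9 statements merged into one kernel-verified Lean document; each statement's English description precedes it below -/
import Mathlib

section
/- If M is a metric space whose distance satisfies the strong triangle inequality dist x z ≤ max (dist x y) (dist y z) for all x, y, z (an ultrametric space), then the Hausdorff distance also satisfies the strong triangle inequality: for all nonempty bounded subsets A, B, C of M, hausdorffDist A C ≤ max (hausdorffDist A B) (hausdorffDist B C). -/
/-!
Every estimate behind the usual triangle inequality for the Hausdorff distance goes through with
`max` in place of `+`: the strong triangle inequality for `edist` passes to the distance from a
point to a set, since `⨅` commutes with `max` in `ℝ≥0∞`, and from there to the Hausdorff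
extended distance. The real Hausdorff distance is its `toReal`; once `A` and `B` are at finite
Hausdorff distance, `C` is at finite distance from both or from neither, so truncating `⊤` to `0`
does no harm.
-/

open Metric ENNReal

namespace IsUltrametricDist

variable {M : Type*} [PseudoMetricSpace M] [IsUltrametricDist M]

lemma edist_triangle_max (x y z : M) : edist x z ≤ max (edist x y) (edist y z) := by
  simp only [edist_dist, ← ENNReal.ofReal_max]
  exact ENNReal.ofReal_le_ofReal (dist_triangle_max x y z)

lemma infEDist_le_max_edist_infEDist {x y : M} {s : Set M} :
    infEDist x s ≤ max (edist x y) (infEDist y s) :=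
  calc infEDist x s ≤ ⨅ z ∈ s, max (edist x y) (edist y z) :=
        iInf₂_mono fun z _ => edist_triangle_max x y z
    _ = max (edist x y) (infEDist y s) := (sup_iInf₂_eq _).symm

lemma infEDist_le_max_infEDist_hausdorffEDist {x : M} {s t : Set M} :
    infEDist x t ≤ max (infEDist x s) (hausdorffEDist s t) :=
  calc infEDist x t ≤ ⨅ y ∈ s, max (edist x y) (hausdorffEDist s t) :=
        le_iInf₂ fun _ hy => infEDist_le_max_edist_infEDist.trans
          (max_le_max le_rfl (infEDist_le_hausdorffEDist_of_mem hy))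
    _ = max (infEDist x s) (hausdorffEDist s t) := (iInf₂_sup_eq _).symm

lemma hausdorffEDist_triangle_max {s t u : Set M} :
    hausdorffEDist s u ≤ max (hausdorffEDist s t) (hausdorffEDist t u) := by
  refine hausdorffEDist_le_of_infEDist (fun x hx => ?_) (fun x hx => ?_)
  · exact infEDist_le_max_infEDist_hausdorffEDist.trans
      (max_le_max (infEDist_le_hausdorffEDist_of_mem hx) le_rfl)
  · calc infEDist x s ≤ max (infEDist x t) (hausdorffEDist t s) :=
          infEDist_le_max_infEDist_hausdorffEDist
      _ ≤ max (hausdorffEDist u t) (hausdorffEDist t s) :=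
          max_le_max (infEDist_le_hausdorffEDist_of_mem hx) le_rfl
      _ = max (hausdorffEDist s t) (hausdorffEDist t u) := by
          rw [max_comm, hausdorffEDist_comm (s := u), hausdorffEDist_comm (s := t)]

lemma hausdorffDist_triangle_max {s t u : Set M} (fin : hausdorffEDist s t ≠ ⊤) :
    hausdorffDist s u ≤ max (hausdorffDist s t) (hausdorffDist t u) := by
  by_cases hsu : hausdorffEDist s u = ⊤
  · rw [hausdorffDist, hsu, toReal_top]
    exact le_max_of_le_left hausdorffDist_nonneg
  have htu : hausdorffEDist t u ≠ ⊤ := by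
    refine ne_top_of_le_ne_top (max_ne_top ?_ hsu) hausdorffEDist_triangle_max
    rwa [hausdorffEDist_comm]
  rw [hausdorffDist, hausdorffDist, hausdorffDist, ← toReal_max fin htu]
  exact toReal_mono (max_ne_top fin htu) hausdorffEDist_triangle_max

end IsUltrametricDist

theorem hausdorffDist_strong_triangle_general {M : Type*} [MetricSpace M]
    (hultra : ∀ x y z : M, dist x z ≤ max (dist x y) (dist y z))
    (A B C : Set M) (hA : A.Nonempty) (hB : B.Nonempty)
    (hAbd : Bornology.IsBounded A) (hBbd : Bornology.IsBounded B) :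
    hausdorffDist A C ≤ max (hausdorffDist A B) (hausdorffDist B C) :=
  have : IsUltrametricDist M := ⟨hultra⟩
  IsUltrametricDist.hausdorffDist_triangle_max
    (hausdorffEDist_ne_top_of_nonempty_of_bounded hA hB hAbd hBbd)

/-- In an ultrametric space, the Hausdorff distance on nonempty bounded sets also satisfies
the strong triangle inequality. -/
theorem hausdorffDist_strong_triangle {M : Type*} [MetricSpace M]
    (hultra : ∀ x y z : M, dist x z ≤ max (dist x y) (dist y z))
    (A B C : Set M) (hA : A.Nonempty) (hB : B.Nonempty) (hC : C.Nonempty)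
    (hAbd : Bornology.IsBounded A) (hBbd : Bornology.IsBounded B)
    (hCbd : Bornology.IsBounded C) :
    hausdorffDist A C ≤ max (hausdorffDist A B) (hausdorffDist B C) :=
  hausdorffDist_strong_triangle_general hultra A B C hA hB hAbd hBbd
end

section
/- A multivalued stream transformer T : (ℕ → A) → Set (ℕ → B) with all values nonempty is δ-causal (for δ ∈ ℕ) if and only if it is a (1/2)^δ-contraction, i.e., for all streams f, g and every u ∈ T f there exists v ∈ T g with dist u v ≤ (1/2)^δ * dist f g. -/
/-!
In the prefix metric, `dist u v ≤ (1/2)^n` says exactly that `u` and `v` agree below `n`, and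
`dist f g = (1/2)^k` for `f ≠ g` with `k` their first difference. So `δ`-causality (agreement
below `k` forces matching outputs below `k + δ`) is the contraction inequality read at the
scale `(1/2)^k`.
-/

open Metric

/-- The prefix metric on streams: `dist f g = (1/2)^n` where `n` is the first index
at which `f` and `g` differ (Mathlib's `PiNat` distance). -/
noncomputable instance streamMetricSpace {A : Type*} : MetricSpace (ℕ → A) :=
  letI : TopologicalSpace A := ⊥
  haveI : DiscreteTopology A := ⟨rfl⟩
  PiNat.metricSpace

/-- A multivalued stream transformer `T` is `δ`-causal if whenever two input streams agree
on all indices `< k`, the sets of restrictions to indices `< k + δ` of their output sets agree. -/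
def IsCausal {A B : Type*} (δ : ℕ) (T : (ℕ → A) → Set (ℕ → B)) : Prop :=
  ∀ (k : ℕ) (f g : ℕ → A), (∀ i < k, f i = g i) →
    (fun (u : ℕ → B) (i : Fin (k + δ)) => u (i : ℕ)) '' T f =
      (fun (u : ℕ → B) (i : Fin (k + δ)) => u (i : ℕ)) '' T g

section StreamDist

variable {A B : Type*}

lemma stream_dist_le_half_pow_iff {f g : ℕ → A} {n : ℕ} :
    dist f g ≤ (1 / 2 : ℝ) ^ n ↔ ∀ i < n, f i = g i :=
  PiNat.mem_cylinder_iff_dist_le.symm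

lemma stream_dist_eq_half_pow_firstDiff {f g : ℕ → A} (h : f ≠ g) :
    dist f g = (1 / 2 : ℝ) ^ PiNat.firstDiff f g :=
  PiNat.dist_eq_of_ne h

lemma restrict_eq_iff_dist_le {u v : ℕ → B} {n : ℕ} :
    (fun i : Fin n => u i) = (fun i : Fin n => v i) ↔ dist u v ≤ (1 / 2 : ℝ) ^ n := by
  rw [stream_dist_le_half_pow_iff, funext_iff]
  exact ⟨fun h i hi => h ⟨i, hi⟩, fun h i => h i i.2⟩

end StreamDist

section Transformer

variable {A B : Type*} {δ : ℕ} {T : (ℕ → A) → Set (ℕ → B)}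

lemma IsCausal.exists_dist_le (hT : IsCausal δ T) {f g : ℕ → A} {u : ℕ → B} (hu : u ∈ T f) :
    ∃ v ∈ T g, dist u v ≤ (1 / 2 : ℝ) ^ δ * dist f g := by
  rcases eq_or_ne f g with rfl | hfg
  · exact ⟨u, hu, by simp⟩
  set k := PiNat.firstDiff f g
  obtain ⟨v, hv, hvu⟩ :
      (fun i : Fin (k + δ) => u i) ∈ (fun (w : ℕ → B) (i : Fin (k + δ)) => w i) '' T g :=
    hT k f g (fun _ hi => PiNat.apply_eq_of_lt_firstDiff hi) ▸ ⟨u, hu, rfl⟩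
  refine ⟨v, hv, ?_⟩
  rw [stream_dist_eq_half_pow_firstDiff hfg, ← pow_add, add_comm, dist_comm]
  exact restrict_eq_iff_dist_le.1 hvu

lemma image_restrict_subset_of_contraction
    (hT : ∀ f g : ℕ → A, ∀ u ∈ T f, ∃ v ∈ T g, dist u v ≤ (1 / 2 : ℝ) ^ δ * dist f g)
    {k : ℕ} {f g : ℕ → A} (hfg : ∀ i < k, f i = g i) :
    (fun (u : ℕ → B) (i : Fin (k + δ)) => u i) '' T f ⊆
      (fun (u : ℕ → B) (i : Fin (k + δ)) => u i) '' T g := by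
  rintro _ ⟨u, hu, rfl⟩
  obtain ⟨v, hv, huv⟩ := hT f g u hu
  refine ⟨v, hv, restrict_eq_iff_dist_le.2 ?_⟩
  calc dist v u = dist u v := dist_comm v u
    _ ≤ (1 / 2 : ℝ) ^ δ * (1 / 2) ^ k :=
        huv.trans (by gcongr; exact stream_dist_le_half_pow_iff.2 hfg)
    _ = (1 / 2) ^ (k + δ) := by rw [← pow_add, add_comm]

end Transformer

theorem causal_iff_contraction_general {A B : Type*} (δ : ℕ)
    (T : (ℕ → A) → Set (ℕ → B)) :
    IsCausal δ T ↔
      ∀ f g : ℕ → A, ∀ u ∈ T f, ∃ v ∈ T g, dist u v ≤ (1 / 2 : ℝ) ^ δ * dist f g :=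
  ⟨fun hT _ _ _ hu => hT.exists_dist_le hu,
    fun hT _ _ _ hfg => (image_restrict_subset_of_contraction hT hfg).antisymm
      (image_restrict_subset_of_contraction hT fun i hi => (hfg i hi).symm)⟩

/-- A multivalued stream transformer with nonempty values is δ-causal iff it is a
(1/2)^δ-contraction. -/
theorem causal_iff_contraction {A B : Type*} (δ : ℕ)
    (T : (ℕ → A) → Set (ℕ → B)) (hne : ∀ f, (T f).Nonempty) :
    IsCausal δ T ↔
      ∀ f g : ℕ → A, ∀ u ∈ T f, ∃ v ∈ T g, dist u v ≤ (1 / 2 : ℝ) ^ δ * dist f g :=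
  causal_iff_contraction_general δ T
end

section
/- A multivalued stream transformer T : (ℕ → A) → Set (ℕ → B) with all values nonempty is weakly causal if and only if it is nonexpansive, and it is strongly causal if and only if it is contractive. -/
open Metric

/-- For metric spaces, T is an l-contraction if every output of T x admits an output of T y
at distance at most l * dist x y. -/
def IsMultiContraction {M N : Type*} [MetricSpace M] [MetricSpace N]
    (l : ℝ) (T : M → Set N) : Prop :=
  ∀ x y : M, ∀ u ∈ T x, ∃ v ∈ T y, dist u v ≤ l * dist x y

/-!
In the prefix metric, `dist u v ≤ (1/2)^n` says exactly that `u` and `v` agree below `n`, so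
`δ`-causality is the statement that `T` is a `(1/2)^δ`-contraction. Moreover all distances are
powers of `1/2`, so `dist u v < dist f g` already forces `dist u v ≤ dist f g / 2`: every
contraction is a `1/2`-contraction, i.e. `1`-causal.
-/

namespace Stream'

variable {A B : Type*}

lemma dist_le_half_pow_iff {f g : ℕ → A} {n : ℕ} :
    dist f g ≤ (1 / 2 : ℝ) ^ n ↔ ∀ i < n, f i = g i :=
  (PiNat.mem_cylinder_iff_dist_le (x := g) (y := f)).symm

lemma dist_le_half_mul_of_dist_lt {f g : ℕ → A} {u v : ℕ → B} (h : dist u v < dist f g) :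
    dist u v ≤ 1 / 2 * dist f g := by
  have hfg : f ≠ g := by
    rintro rfl
    exact (dist_nonneg.trans_lt h).ne' (dist_self f)
  rw [PiNat.dist_eq_of_ne hfg] at h ⊢
  rw [← pow_succ', dist_le_half_pow_iff]
  exact fun i hi => PiNat.apply_eq_of_dist_lt h (Nat.lt_succ_iff.1 hi)

end Stream'

open Stream'

section

variable {A B : Type*} {T : (ℕ → A) → Set (ℕ → B)}

lemma isCausal_iff {δ : ℕ} :
    IsCausal δ T ↔ ∀ (k : ℕ) (f g : ℕ → A), (∀ i < k, f i = g i) →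
      ∀ u ∈ T f, ∃ v ∈ T g, ∀ i < k + δ, u i = v i := by
  constructor
  · intro h k f g hfg u hu
    obtain ⟨v, hv, hvu⟩ : (fun i : Fin (k + δ) => u i) ∈ (fun v (i : Fin (k + δ)) => v i) '' T g :=
      h k f g hfg ▸ ⟨u, hu, rfl⟩
    exact ⟨v, hv, fun i hi => (congrFun hvu ⟨i, hi⟩).symm⟩
  · intro H k f g hfg
    have restrict_subset : ∀ f g : ℕ → A, (∀ i < k, f i = g i) →
        (fun (u : ℕ → B) (i : Fin (k + δ)) => u i) '' T f ⊆
          (fun (u : ℕ → B) (i : Fin (k + δ)) => u i) '' T g := by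
      rintro f g hfg _ ⟨u, hu, rfl⟩
      obtain ⟨v, hv, huv⟩ := H k f g hfg u hu
      exact ⟨v, hv, funext fun i => (huv i i.2).symm⟩
    exact (restrict_subset f g hfg).antisymm
      (restrict_subset g f fun i hi => (hfg i hi).symm)

lemma isCausal_iff_isMultiContraction {δ : ℕ} :
    IsCausal δ T ↔ IsMultiContraction ((1 / 2 : ℝ) ^ δ) T := by
  rw [isCausal_iff]
  constructor
  · intro H f g u hu
    by_cases hfg : f = g
    · exact ⟨u, hfg ▸ hu, by simp⟩
    obtain ⟨v, hv, huv⟩ :=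
      H (PiNat.firstDiff f g) f g (fun i hi => PiNat.apply_eq_of_lt_firstDiff hi) u hu
    refine ⟨v, hv, ?_⟩
    rw [PiNat.dist_eq_of_ne hfg, ← pow_add, add_comm, dist_le_half_pow_iff]
    exact huv
  · intro H k f g hfg u hu
    obtain ⟨v, hv, huv⟩ := H f g u hu
    refine ⟨v, hv, dist_le_half_pow_iff.1 ?_⟩
    calc dist u v ≤ (1 / 2 : ℝ) ^ δ * dist f g := huv
      _ ≤ (1 / 2 : ℝ) ^ δ * (1 / 2 : ℝ) ^ k := by gcongr; exact dist_le_half_pow_iff.2 hfg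
      _ = (1 / 2 : ℝ) ^ (k + δ) := by rw [pow_add, mul_comm]

lemma IsMultiContraction.half_of_lt_one {l : ℝ} (hl : l < 1) (hT : IsMultiContraction l T) :
    IsMultiContraction (1 / 2) T := by
  intro f g u hu
  obtain ⟨v, hv, huv⟩ := hT f g u hu
  refine ⟨v, hv, ?_⟩
  rcases (dist_nonneg (x := f) (y := g)).eq_or_lt with hfg | hfg
  · simpa [← hfg] using huv
  · exact dist_le_half_mul_of_dist_lt (huv.trans_lt (mul_lt_of_lt_one_left hfg hl))

end

theorem causality_contraction_connection_general {A B : Type*}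
    (T : (ℕ → A) → Set (ℕ → B)) :
    (IsCausal 0 T ↔ IsMultiContraction 1 T) ∧
      ((∃ δ : ℕ, 1 ≤ δ ∧ IsCausal δ T) ↔
        ∃ l : ℝ, 0 ≤ l ∧ l < 1 ∧ IsMultiContraction l T) := by
  refine ⟨by simpa using isCausal_iff_isMultiContraction (T := T) (δ := 0), ?_, ?_⟩
  · rintro ⟨δ, hδ, hT⟩
    exact ⟨(1 / 2) ^ δ, by positivity, pow_lt_one₀ (by norm_num) (by norm_num) (by omega),
      isCausal_iff_isMultiContraction.1 hT⟩
  · rintro ⟨l, -, hl, hT⟩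
    exact ⟨1, le_rfl, isCausal_iff_isMultiContraction.2 (by simpa using hT.half_of_lt_one hl)⟩

/-- A multivalued stream transformer with nonempty values is weakly causal iff it is
nonexpansive, and strongly causal iff it is contractive. -/
theorem causality_contraction_connection {A B : Type*}
    (T : (ℕ → A) → Set (ℕ → B)) (hne : ∀ f, (T f).Nonempty) :
    (IsCausal 0 T ↔ IsMultiContraction 1 T) ∧
      ((∃ δ : ℕ, 1 ≤ δ ∧ IsCausal δ T) ↔
        ∃ l : ℝ, 0 ≤ l ∧ l < 1 ∧ IsMultiContraction l T) :=
  causality_contraction_connection_general T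
end

section
/- Let T : (ℕ → A) → Set (ℕ → B) be a multivalued stream transformer all of whose values are nonempty and compact. Then T is weakly causal if and only if hausdorffDist (T f) (T g) ≤ dist f g for all f, g, and T is strongly causal if and only if there exists l with 0 < l < 1 such that hausdorffDist (T f) (T g) ≤ l * dist f g for all f, g. -/
open Metric

/-
Nonempty sets `s`, `t` of streams have the same prefixes of length `n` as soon as every point of
each lies within `(1/2)^n` of the other. So equal prefixes give `hausdorffDist s t ≤ (1/2)^n`,
and `hausdorffDist s t < (1/2)^n` gives equal prefixes of length `n + 1`, because
`dist x y < (1/2)^n` already forces `x i = y i` for all `i ≤ n`. As `dist f g = (1/2)^k` with `k` the first index where `f` and `g` differ,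
`δ`-causality yields the factor `(1/2)^δ`; conversely a factor `l < 1` makes the Hausdorff
distance strictly smaller than `(1/2)^k`, which buys one step of delay.
-/

section StreamPrefix

variable {A B : Type*}

-- `IsCausal` compares images under exactly this map, so its equations are `streamPrefix` ones.
def streamPrefix (n : ℕ) (u : ℕ → A) : Fin n → A := fun i => u i

theorem streamPrefix_eq_iff_dist_le {x y : ℕ → A} {n : ℕ} :
    streamPrefix n x = streamPrefix n y ↔ dist x y ≤ (1 / 2 : ℝ) ^ n := by
  change _ ↔ @dist _ PiNat.dist x y ≤ _
  rw [← PiNat.mem_cylinder_iff_dist_le, PiNat.mem_cylinder_iff, funext_iff]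
  exact ⟨fun h i hi => h ⟨i, hi⟩, fun h i => h i i.isLt⟩

theorem streamPrefix_succ_eq_of_dist_lt {x y : ℕ → A} {n : ℕ} (h : dist x y < (1 / 2 : ℝ) ^ n) :
    streamPrefix (n + 1) x = streamPrefix (n + 1) y :=
  funext fun i => PiNat.apply_eq_of_dist_lt (E := fun _ => A) h (Nat.lt_succ_iff.1 i.isLt)

theorem stream_isBounded (s : Set (ℕ → A)) : Bornology.IsBounded s :=
  isBounded_iff.2 ⟨1, fun x _ y _ => PiNat.dist_le_one (E := fun _ => A) x y⟩

variable {s t : Set (ℕ → B)}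

theorem hausdorffDist_le_of_streamPrefix_image_eq {n : ℕ}
    (h : streamPrefix n '' s = streamPrefix n '' t) : hausdorffDist s t ≤ (1 / 2 : ℝ) ^ n := by
  have close : ∀ {s t : Set (ℕ → B)}, streamPrefix n '' s ⊆ streamPrefix n '' t →
      ∀ u ∈ s, ∃ v ∈ t, dist u v ≤ (1 / 2 : ℝ) ^ n := by
    intro s t hst u hu
    obtain ⟨v, hv, hvu⟩ := hst (Set.mem_image_of_mem _ hu)
    exact ⟨v, hv, streamPrefix_eq_iff_dist_le.1 hvu.symm⟩
  exact hausdorffDist_le_of_mem_dist (by positivity) (close h.le) (close h.ge)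

theorem streamPrefix_image_subset_of_hausdorffDist_lt (hs : s.Nonempty) (ht : t.Nonempty)
    {n : ℕ} (h : hausdorffDist s t < (1 / 2 : ℝ) ^ n) :
    streamPrefix (n + 1) '' s ⊆ streamPrefix (n + 1) '' t := by
  rintro _ ⟨u, hu, rfl⟩
  have hfin : hausdorffEDist s t ≠ ⊤ :=
    hausdorffEDist_ne_top_of_nonempty_of_bounded hs ht (stream_isBounded s)
      (stream_isBounded t)
  obtain ⟨v, hv, huv⟩ := exists_dist_lt_of_hausdorffDist_lt hu h hfin
  exact ⟨v, hv, (streamPrefix_succ_eq_of_dist_lt huv).symm⟩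

theorem streamPrefix_image_eq_of_hausdorffDist_lt (hs : s.Nonempty) (ht : t.Nonempty)
    {n : ℕ} (h : hausdorffDist s t < (1 / 2 : ℝ) ^ n) :
    streamPrefix (n + 1) '' s = streamPrefix (n + 1) '' t :=
  (streamPrefix_image_subset_of_hausdorffDist_lt hs ht h).antisymm
    (streamPrefix_image_subset_of_hausdorffDist_lt ht hs (by rwa [hausdorffDist_comm]))

theorem streamPrefix_image_eq_of_hausdorffDist_le (hs : s.Nonempty) (ht : t.Nonempty)
    {n : ℕ} (h : hausdorffDist s t ≤ (1 / 2 : ℝ) ^ n) :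
    streamPrefix n '' s = streamPrefix n '' t := by
  cases n with
  | zero => rw [(hs.image _).eq_univ, (ht.image _).eq_univ]
  | succ m =>
    refine streamPrefix_image_eq_of_hausdorffDist_lt hs ht (h.trans_lt ?_)
    exact pow_lt_pow_right_of_lt_one₀ (by norm_num) (by norm_num) m.lt_succ_self

end StreamPrefix

section Causality

variable {A B : Type*} {T : (ℕ → A) → Set (ℕ → B)}

theorem IsCausal.hausdorffDist_le {δ : ℕ} (hT : IsCausal δ T) (f g : ℕ → A) :
    hausdorffDist (T f) (T g) ≤ (1 / 2 : ℝ) ^ δ * dist f g := by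
  rcases eq_or_ne f g with rfl | hfg
  · simp
  have hdist : dist f g = (1 / 2 : ℝ) ^ PiNat.firstDiff f g := PiNat.dist_eq_of_ne hfg
  have hprefix := hT _ f g fun i hi => PiNat.apply_eq_of_lt_firstDiff hi
  rw [hdist, ← pow_add, add_comm]
  exact hausdorffDist_le_of_streamPrefix_image_eq hprefix

theorem isCausal_zero_of_hausdorffDist_le_dist (hne : ∀ f, (T f).Nonempty)
    (hT : ∀ f g, hausdorffDist (T f) (T g) ≤ dist f g) : IsCausal 0 T := by
  intro k f g hfg
  have hdist : dist f g ≤ (1 / 2 : ℝ) ^ k :=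
    streamPrefix_eq_iff_dist_le.1 (funext fun i => hfg i i.isLt)
  exact streamPrefix_image_eq_of_hausdorffDist_le (hne f) (hne g) ((hT f g).trans hdist)

theorem isCausal_one_of_hausdorffDist_le_mul_dist (hne : ∀ f, (T f).Nonempty) {l : ℝ}
    (hl : l < 1) (hT : ∀ f g, hausdorffDist (T f) (T g) ≤ l * dist f g) : IsCausal 1 T := by
  intro k f g hfg
  have hdist : dist f g ≤ (1 / 2 : ℝ) ^ k :=
    streamPrefix_eq_iff_dist_le.1 (funext fun i => hfg i i.isLt)
  have hlt : l * dist f g < (1 / 2 : ℝ) ^ k := by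
    nlinarith [mul_nonneg (sub_nonneg.2 hl.le) (dist_nonneg (x := f) (y := g)),
      pow_pos (by norm_num : (0 : ℝ) < 1 / 2) k]
  exact streamPrefix_image_eq_of_hausdorffDist_lt (hne f) (hne g) ((hT f g).trans_lt hlt)

end Causality

theorem causality_contraction_connection_lipschitz_general {A B : Type*}
    (T : (ℕ → A) → Set (ℕ → B)) (hne : ∀ f, (T f).Nonempty) :
    (IsCausal 0 T ↔ ∀ f g : ℕ → A, hausdorffDist (T f) (T g) ≤ dist f g) ∧
      ((∃ δ : ℕ, 1 ≤ δ ∧ IsCausal δ T) ↔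
        ∃ l : ℝ, 0 < l ∧ l < 1 ∧ ∀ f g : ℕ → A, hausdorffDist (T f) (T g) ≤ l * dist f g) := by
  refine ⟨⟨fun hT f g => by simpa using hT.hausdorffDist_le f g,
    isCausal_zero_of_hausdorffDist_le_dist hne⟩, ⟨?_, ?_⟩⟩
  · rintro ⟨δ, hδ, hT⟩
    exact ⟨(1 / 2) ^ δ, by positivity, pow_lt_one₀ (by norm_num) (by norm_num) (by omega),
      hT.hausdorffDist_le⟩
  · rintro ⟨l, -, hl, hT⟩
    exact ⟨1, le_rfl, isCausal_one_of_hausdorffDist_le_mul_dist hne hl hT⟩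

/-- A stream transformer with nonempty compact values is weakly causal iff it is Lipschitz
nonexpansive, and strongly causal iff it is Lipschitz contractive (Hausdorff distance). -/
theorem causality_contraction_connection_lipschitz {A B : Type*}
    (T : (ℕ → A) → Set (ℕ → B)) (hne : ∀ f, (T f).Nonempty)
    (hcomp : ∀ f, IsCompact (T f)) :
    (IsCausal 0 T ↔ ∀ f g : ℕ → A, hausdorffDist (T f) (T g) ≤ dist f g) ∧
      ((∃ δ : ℕ, 1 ≤ δ ∧ IsCausal δ T) ↔
        ∃ l : ℝ, 0 < l ∧ l < 1 ∧ ∀ f g : ℕ → A, hausdorffDist (T f) (T g) ≤ l * dist f g) :=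
  causality_contraction_connection_lipschitz_general T hne
end

section
/- Let M, N be metric spaces and let T : M → Set N be l-Lipschitz with nonempty compact values. Then the strongest post transformer SP_T is l-Lipschitz on nonempty compact sets: for all nonempty compact subsets P, Q of M, hausdorffDist (⋃_{x ∈ P} T x) (⋃_{x ∈ Q} T x) ≤ l * hausdorffDist P Q. -/
/-! A point `y ∈ T x` with `x ∈ P` lies, for every `q ∈ Q`, within
`hausdorffDist (T x) (T q) ≤ l * dist x q` of `T q ⊆ ⋃ q ∈ Q, T q`. Taking the infimum over `q`
bounds its distance to the image of `Q` by `l * infDist x Q ≤ l * hausdorffDist P Q`; the other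
half of the Hausdorff distance is symmetric. -/

open Metric

section StrongestPost

open Bornology

variable {M N : Type*} [PseudoMetricSpace M] [PseudoMetricSpace N] {T : M → Set N} {l : ℝ}

theorem infDist_biUnion_le_mul_infDist (hl : 0 < l) (hne : ∀ x, (T x).Nonempty)
    (hbdd : ∀ x, IsBounded (T x)) (hT : ∀ x y, hausdorffDist (T x) (T y) ≤ l * dist x y)
    {B : Set M} (hB : B.Nonempty) {x : M} {y : N} (hy : y ∈ T x) :
    infDist y (⋃ q ∈ B, T q) ≤ l * infDist x B := by
  -- dividing by `l` turns the claim into a lower bound on `infDist x B`, checked pointwise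
  refine (div_le_iff₀' hl).1 ((le_infDist hB).2 fun q hq => (div_le_iff₀' hl).2 ?_)
  have hfin : hausdorffEDist (T x) (T q) ≠ ⊤ :=
    hausdorffEDist_ne_top_of_nonempty_of_bounded (hne x) (hne q) (hbdd x) (hbdd q)
  calc infDist y (⋃ q ∈ B, T q) ≤ infDist y (T q) :=
        infDist_le_infDist_of_subset (Set.subset_biUnion_of_mem hq) (hne q)
    _ ≤ hausdorffDist (T x) (T q) := infDist_le_hausdorffDist_of_mem hy hfin
    _ ≤ l * dist x q := hT x q

theorem infDist_biUnion_le_mul_hausdorffDist (hl : 0 < l) (hne : ∀ x, (T x).Nonempty)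
    (hbdd : ∀ x, IsBounded (T x)) (hT : ∀ x y, hausdorffDist (T x) (T y) ≤ l * dist x y)
    {P Q : Set M} (hPQ : hausdorffEDist P Q ≠ ⊤) (hQ : Q.Nonempty) {y : N}
    (hy : y ∈ ⋃ x ∈ P, T x) :
    infDist y (⋃ q ∈ Q, T q) ≤ l * hausdorffDist P Q := by
  obtain ⟨x, hxP, hyx⟩ := Set.mem_iUnion₂.1 hy
  calc infDist y (⋃ q ∈ Q, T q) ≤ l * infDist x Q :=
        infDist_biUnion_le_mul_infDist hl hne hbdd hT hQ hyx
    _ ≤ l * hausdorffDist P Q := by gcongr; exact infDist_le_hausdorffDist_of_mem hxP hPQ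

theorem hausdorffDist_biUnion_le (hl : 0 < l) (hne : ∀ x, (T x).Nonempty)
    (hbdd : ∀ x, IsBounded (T x)) (hT : ∀ x y, hausdorffDist (T x) (T y) ≤ l * dist x y)
    {P Q : Set M} (hP : P.Nonempty) (hPb : IsBounded P) (hQ : Q.Nonempty) (hQb : IsBounded Q) :
    hausdorffDist (⋃ x ∈ P, T x) (⋃ x ∈ Q, T x) ≤ l * hausdorffDist P Q := by
  have hPQ := hausdorffEDist_ne_top_of_nonempty_of_bounded hP hQ hPb hQb
  refine hausdorffDist_le_of_infDist (mul_nonneg hl.le hausdorffDist_nonneg)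
    (fun y hy => infDist_biUnion_le_mul_hausdorffDist hl hne hbdd hT hPQ hQ hy)
    (fun y hy => ?_)
  rw [hausdorffDist_comm]
  exact infDist_biUnion_le_mul_hausdorffDist hl hne hbdd hT (by rwa [hausdorffEDist_comm]) hP hy

end StrongestPost

/-- If T is l-Lipschitz with nonempty compact values then the strongest post transformer
`P ↦ ⋃ x ∈ P, T x` is l-Lipschitz on nonempty compact sets. -/
theorem strongest_post_lipschitz {M N : Type*} [MetricSpace M] [MetricSpace N]
    (T : M → Set N) (l : ℝ) (hl : 0 < l)
    (hne : ∀ x, (T x).Nonempty) (hcomp : ∀ x, IsCompact (T x))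
    (hT : ∀ x y : M, hausdorffDist (T x) (T y) ≤ l * dist x y) :
    ∀ P Q : Set M, P.Nonempty → IsCompact P → Q.Nonempty → IsCompact Q →
      hausdorffDist (⋃ x ∈ P, T x) (⋃ x ∈ Q, T x) ≤ l * hausdorffDist P Q :=
  fun _ _ hP hPc hQ hQc =>
    hausdorffDist_biUnion_le hl hne (fun x => (hcomp x).isBounded) hT hP hPc.isBounded hQ
      hQc.isBounded
end

section
/- Let M be a complete metric space and let T : M → Set M be l-Lipschitz with nonempty compact values, where 0 < l < 1, and let F be the unique nonempty compact subset of M with ⋃_{x ∈ F} T x = F. Then every fixpoint of T is contained in F: if x ∈ T x then x ∈ F. -/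
/-! If `y ∈ F` is a point of `F` nearest to the fixpoint `x ∈ T x`, then `T y ⊆ F` gives
`d(x, F) ≤ d(x, T y) ≤ d_H(T x, T y) ≤ l · d(x, y) = l · d(x, F)`, so `d(x, F) = 0` as `l < 1`,
and `x ∈ F` because `F` is closed. -/

open Metric Bornology

section

variable {M : Type*} [MetricSpace M]

theorem infDist_le_hausdorffDist_of_mem_of_subset {x : M} {s t u : Set M} (hx : x ∈ s)
    (htu : t ⊆ u) (ht : t.Nonempty) (hsb : IsBounded s) (htb : IsBounded t) :
    infDist x u ≤ hausdorffDist s t :=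
  (infDist_le_infDist_of_subset htu ht).trans <| infDist_le_hausdorffDist_of_mem hx <|
    hausdorffEDist_ne_top_of_nonempty_of_bounded ⟨x, hx⟩ ht hsb htb

theorem infDist_le_mul_dist_of_mem_self {T : M → Set M} {l : ℝ} (hne : ∀ x, (T x).Nonempty)
    (hb : ∀ x, IsBounded (T x)) (hT : ∀ x y, hausdorffDist (T x) (T y) ≤ l * dist x y)
    {F : Set M} (hF : ∀ y ∈ F, T y ⊆ F) {x y : M} (hx : x ∈ T x) (hy : y ∈ F) :
    infDist x F ≤ l * dist x y :=
  (infDist_le_hausdorffDist_of_mem_of_subset hx (hF y hy) (hne y) (hb x) (hb y)).trans (hT x y)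

end

theorem fixpoint_mem_strongest_post_fixpoint_general {M : Type*} [MetricSpace M]
    (T : M → Set M) (l : ℝ) (hl1 : l < 1)
    (hne : ∀ x, (T x).Nonempty) (hcomp : ∀ x, IsCompact (T x))
    (hT : ∀ x y : M, hausdorffDist (T x) (T y) ≤ l * dist x y)
    (F : Set M) (hFne : F.Nonempty) (hFcomp : IsCompact F) (hFfix : (⋃ x ∈ F, T x) = F) :
    ∀ x : M, x ∈ T x → x ∈ F := by
  intro x hx
  have hinv : ∀ y ∈ F, T y ⊆ F := fun y hy => hFfix ▸ Set.subset_biUnion_of_mem hy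
  obtain ⟨y, hyF, hyd⟩ := hFcomp.exists_infDist_eq_dist hFne x
  have hcontr : infDist x F ≤ l * infDist x F := hyd ▸
    infDist_le_mul_dist_of_mem_self hne (fun z => (hcomp z).isBounded) hT hinv hx hyF
  have hzero : infDist x F = 0 := by nlinarith [infDist_nonneg (x := x) (s := F)]
  exact (hFcomp.isClosed.mem_iff_infDist_zero hFne).2 hzero

/-- Every fixpoint of a Lipschitz contractive multivalued map with nonempty compact values on a
complete metric space is contained in the unique nonempty compact fixed set of its strongest
post transformer. -/
theorem fixpoint_mem_strongest_post_fixpoint {M : Type*} [MetricSpace M] [CompleteSpace M]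
    (T : M → Set M) (l : ℝ) (hl0 : 0 < l) (hl1 : l < 1)
    (hne : ∀ x, (T x).Nonempty) (hcomp : ∀ x, IsCompact (T x))
    (hT : ∀ x y : M, hausdorffDist (T x) (T y) ≤ l * dist x y)
    (F : Set M) (hFne : F.Nonempty) (hFcomp : IsCompact F) (hFfix : (⋃ x ∈ F, T x) = F) :
    ∀ x : M, x ∈ T x → x ∈ F :=
  fixpoint_mem_strongest_post_fixpoint_general T l hl1 hne hcomp hT F hFne hFcomp hFfix
end

section
/- Let T : (ℕ → A) → Set (ℕ → A) be l-Lipschitz with nonempty compact values, where 0 < l < 1, and let F be the unique nonempty compact set of streams with ⋃_{f ∈ F} T f = F. If P is a nonempty closed set of streams such that T f ⊆ P for every f ∈ P, then F ⊆ P. -/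
/-!
The distance to `P` is contracted by `T`: if `x ∈ T f` then, for every `g ∈ P`, the set `T g ⊆ P`
lies within Hausdorff distance `l * dist f g` of `T f`, so `infDist x P ≤ l * infDist f P`.
Since `F` is covered by the images `T f` of its own points, the maximum `m` of `infDist · P` on
the compact set `F` satisfies `m ≤ l * m`, hence `m = 0`, and `F ⊆ P` because `P` is closed.
-/

open Metric

theorem IsCompact.eq_zero_of_forall_le_mul {X : Type*} [TopologicalSpace X] {K : Set X}
    (hK : IsCompact K) (hKne : K.Nonempty) {d : X → ℝ} (hd : ContinuousOn d K)
    (hd0 : ∀ x ∈ K, 0 ≤ d x) {l : ℝ} (hl0 : 0 ≤ l) (hl1 : l < 1)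
    (hle : ∀ x ∈ K, ∃ y ∈ K, d x ≤ l * d y) : ∀ x ∈ K, d x = 0 := by
  obtain ⟨x₀, hx₀, hmax⟩ := hK.exists_isMaxOn hKne hd
  obtain ⟨y, hy, hxy⟩ := hle x₀ hx₀
  have hmax_le : d x₀ ≤ l * d x₀ := hxy.trans (mul_le_mul_of_nonneg_left (hmax hy) hl0)
  have hmax_zero : d x₀ = 0 := by nlinarith [hd0 x₀ hx₀]
  exact fun x hx => le_antisymm (hmax_zero ▸ hmax hx) (hd0 x hx)

section Contraction

variable {M : Type*} [PseudoMetricSpace M] {T : M → Set M} {l : ℝ}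

theorem infDist_le_mul_infDist_of_invariant (hl : 0 ≤ l) (hne : ∀ f, (T f).Nonempty)
    (hbdd : ∀ f, Bornology.IsBounded (T f))
    (hT : ∀ f g, hausdorffDist (T f) (T g) ≤ l * dist f g)
    {P : Set M} (hPne : P.Nonempty) (hPinv : ∀ g ∈ P, T g ⊆ P) {f x : M} (hx : x ∈ T f) :
    infDist x P ≤ l * infDist f P := by
  have hstep : ∀ g ∈ P, infDist x P ≤ l * dist f g := fun g hg =>
    calc infDist x P ≤ infDist x (T g) := infDist_le_infDist_of_subset (hPinv g hg) (hne g)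
      _ ≤ hausdorffDist (T f) (T g) := infDist_le_hausdorffDist_of_mem hx
          (hausdorffEDist_ne_top_of_nonempty_of_bounded (hne f) (hne g) (hbdd f) (hbdd g))
      _ ≤ l * dist f g := hT f g
  have := hPne.to_subtype
  rw [infDist_eq_iInf (x := f), Real.mul_iInf_of_nonneg hl]
  exact le_ciInf fun g => hstep g g.2

end Contraction

/-- Induction principle for the strongest post fixpoint: if a nonempty closed set P of streams
is invariant under the Lipschitz contractive transformer T, then the unique nonempty compact
fixed set F of the strongest post transformer is contained in P. -/
theorem strongest_post_induction {A : Type*} (T : (ℕ → A) → Set (ℕ → A))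
    (l : ℝ) (hl0 : 0 < l) (hl1 : l < 1)
    (hne : ∀ f, (T f).Nonempty) (hcomp : ∀ f, IsCompact (T f))
    (hT : ∀ f g : ℕ → A, hausdorffDist (T f) (T g) ≤ l * dist f g)
    (F : Set (ℕ → A)) (hFne : F.Nonempty) (hFcomp : IsCompact F)
    (hFfix : (⋃ f ∈ F, T f) = F)
    (P : Set (ℕ → A)) (hPne : P.Nonempty) (hPclosed : IsClosed P)
    (hPinv : ∀ f ∈ P, T f ⊆ P) :
    F ⊆ P := by
  have hcontract : ∀ x ∈ F, ∃ f ∈ F, infDist x P ≤ l * infDist f P := by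
    intro x hx
    rw [← hFfix, Set.mem_iUnion₂] at hx
    obtain ⟨f, hf, hxf⟩ := hx
    exact ⟨f, hf, infDist_le_mul_infDist_of_invariant hl0.le hne (fun f => (hcomp f).isBounded)
      hT hPne hPinv hxf⟩
  have hdist_zero := hFcomp.eq_zero_of_forall_le_mul hFne (continuous_infDist_pt P).continuousOn
    (fun _ _ => infDist_nonneg) hl0.le hl1 hcontract
  exact fun x hx => (hPclosed.mem_iff_infDist_zero hPne).2 (hdist_zero x hx)
end

section
/- Let T : (ℕ → A) → Set (ℕ → A) be a multivalued stream transformer such that (1) every value T f is a closed subset of ℕ → A, (2) there exist streams f₀, f₁ with f₁ ∈ T f₀, and (3) T is an l-contraction for some 0 ≤ l < 1, i.e. for all f, g and every u ∈ T f there exists v ∈ T g with dist u v ≤ l * dist f g. Then T has a fixpoint: there exists f* with f* ∈ T f*. -/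
/-!
Nadler's argument: starting from `f₁ ∈ T f₀`, contractivity lets us choose `f₂ ∈ T f₁` with
`dist f₁ f₂ ≤ l * dist f₀ f₁`, and so on; the resulting orbit has geometrically shrinking steps,
hence converges in the complete space of streams to some `f*`. Contractivity again yields points
of `T f*` arbitrarily close to the orbit, so `f*` lies in the closed set `T f*`.
-/

open Metric

open Filter Topology

instance streamCompleteSpace {A : Type*} : CompleteSpace (ℕ → A) :=
  letI : TopologicalSpace A := ⊥
  haveI : DiscreteTopology A := ⟨rfl⟩
  PiNat.completeSpace

section MultivaluedContraction

variable {X : Type*} [PseudoMetricSpace X]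

def IsMultivaluedContraction (T : X → Set X) (l : ℝ) : Prop :=
  ∀ f g : X, ∀ u ∈ T f, ∃ v ∈ T g, dist u v ≤ l * dist f g

namespace IsMultivaluedContraction

variable {T : X → Set X} {l : ℝ}

theorem exists_orbit_dist_le_geometric (hT : IsMultivaluedContraction T l) (hl0 : 0 ≤ l)
    {f₀ f₁ : X} (hf₁ : f₁ ∈ T f₀) :
    ∃ u : ℕ → X, (∀ n, u (n + 1) ∈ T (u n)) ∧
      ∀ n, dist (u n) (u (n + 1)) ≤ dist f₀ f₁ * l ^ n := by
  -- Iterate on the graph of `T`: a pair `(f, g)` with `g ∈ T f` moves to `(g, v)`.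
  have hstep := fun p : {p : X × X // p.2 ∈ T p.1} => hT p.1.1 p.1.2 p.1.2 p.2
  choose next hnext_mem hnext_dist using hstep
  let step : {p : X × X // p.2 ∈ T p.1} → {p : X × X // p.2 ∈ T p.1} :=
    fun p => ⟨(p.1.2, next p), hnext_mem p⟩
  let orbit : ℕ → {p : X × X // p.2 ∈ T p.1} := fun n => step^[n] ⟨(f₀, f₁), hf₁⟩
  have horbit_succ (n : ℕ) : orbit (n + 1) = step (orbit n) :=
    Function.iterate_succ_apply' step n _
  have horbit_dist (n : ℕ) : dist (orbit n).1.1 (orbit n).1.2 ≤ dist f₀ f₁ * l ^ n := by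
    induction n with
    | zero => simp [orbit]
    | succ n ih =>
      calc dist (orbit (n + 1)).1.1 (orbit (n + 1)).1.2
          ≤ l * dist (orbit n).1.1 (orbit n).1.2 := by
            simpa only [horbit_succ] using hnext_dist (orbit n)
        _ ≤ l * (dist f₀ f₁ * l ^ n) := mul_le_mul_of_nonneg_left ih hl0
        _ = dist f₀ f₁ * l ^ (n + 1) := by ring
  refine ⟨fun n => (orbit n).1.1, fun n => ?_, fun n => ?_⟩
  · simpa only [horbit_succ] using (orbit n).2
  · simpa only [horbit_succ] using horbit_dist n

theorem mem_of_tendsto_orbit (hT : IsMultivaluedContraction T l) {u : ℕ → X} {x : X}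
    (hu_mem : ∀ n, u (n + 1) ∈ T (u n)) (hu : Tendsto u atTop (𝓝 x)) (hTx : IsClosed (T x)) :
    x ∈ T x := by
  choose v hv_mem hv_dist using fun n => hT (u n) x (u (n + 1)) (hu_mem n)
  have hdist : Tendsto (fun n => dist (u (n + 1)) (v n)) atTop (𝓝 0) := by
    refine squeeze_zero (fun _ => dist_nonneg) hv_dist ?_
    simpa using (tendsto_iff_dist_tendsto_zero.1 hu).const_mul l
  have hv : Tendsto v atTop (𝓝 x) := ((tendsto_add_atTop_iff_nat 1).2 hu).congr_dist hdist
  exact hTx.mem_of_tendsto hv (Eventually.of_forall hv_mem)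

theorem exists_mem_self [CompleteSpace X] (hT : IsMultivaluedContraction T l)
    (hclosed : ∀ f, IsClosed (T f)) (hl0 : 0 ≤ l) (hl1 : l < 1) {f₀ f₁ : X} (hf₁ : f₁ ∈ T f₀) :
    ∃ x, x ∈ T x := by
  obtain ⟨u, hu_mem, hu_dist⟩ := hT.exists_orbit_dist_le_geometric hl0 hf₁
  obtain ⟨x, hx⟩ := cauchySeq_tendsto_of_complete (cauchySeq_of_le_geometric l _ hl1 hu_dist)
  exact ⟨x, hT.mem_of_tendsto_orbit hu_mem hx (hclosed x)⟩

end IsMultivaluedContraction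

end MultivaluedContraction

/-- A contractive multivalued stream transformer with closed values which is not the constant
map to the empty set has a fixpoint. -/
theorem contractive_transformer_has_fixpoint {A : Type*} (T : (ℕ → A) → Set (ℕ → A))
    (hclosed : ∀ f, IsClosed (T f)) (f₀ f₁ : ℕ → A) (hf₁ : f₁ ∈ T f₀)
    (l : ℝ) (hl0 : 0 ≤ l) (hl1 : l < 1)
    (hcontr : ∀ f g : ℕ → A, ∀ u ∈ T f, ∃ v ∈ T g, dist u v ≤ l * dist f g) :
    ∃ fstar : ℕ → A, fstar ∈ T fstar :=
  IsMultivaluedContraction.exists_mem_self hcontr hclosed hl0 hl1 hf₁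
end

section
/- Every strongly causal multivalued stream transformer T : (ℕ → A) → Set (ℕ → A) with all values nonempty and compact has a fixpoint: there exists a stream f* with f* ∈ T f*. -/
/-!
For `δ ≥ 1` a `δ`-causal transformer is `1`-causal, and `1`-causality lets us iterate `T` so
that each new output agrees with the previous one on one more coordinate. The prefixes of these
iterates stabilise, so they converge coordinatewise to a stream `x`. Each prefix of `x` is the
prefix of an output of `T` at an input sharing that prefix with `x`, so causality puts points of
`T x` arbitrarily close to `x`; as `T x` is closed, `x ∈ T x`.
-/

open Metric

open PiNat

theorem PiNat.exists_forall_mem_cylinder_of_succ {E : ℕ → Type*} (u : ℕ → ∀ n, E n)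
    (hu : ∀ n, u (n + 1) ∈ cylinder (u n) n) : ∃ x, ∀ n, x ∈ cylinder (u n) n := by
  have stable : ∀ n m, n ≤ m → u m ∈ cylinder (u n) n := by
    intro n m hnm
    induction m, hnm using Nat.le_induction with
    | base => exact self_mem_cylinder _ _
    | succ m hnm ih =>
      rw [← mem_cylinder_iff_eq.mp ih]
      exact cylinder_anti _ hnm (hu m)
  exact ⟨fun i => u (i + 1) i, fun n i hi => (stable (i + 1) n hi i i.lt_succ_self).symm⟩

theorem mem_closure_of_forall_exists_mem_cylinder {A : Type*} {s : Set (ℕ → A)} {x : ℕ → A}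
    (h : ∀ n, ∃ y ∈ s, y ∈ cylinder x n) : x ∈ closure s := by
  refine Metric.mem_closure_iff.mpr fun ε hε => ?_
  obtain ⟨n, hn⟩ := exists_pow_lt_of_lt_one hε one_half_lt_one
  obtain ⟨y, hys, hyx⟩ := h n
  refine ⟨y, hys, ?_⟩
  rw [dist_comm]
  exact (mem_cylinder_iff_dist_le.mp hyx).trans_lt hn

theorem exists_seq_of_forall_mem_exists {α : Type*} {S : ℕ → Set α} (h₀ : (S 0).Nonempty)
    (r : ℕ → α → α → Prop) (h : ∀ n, ∀ x ∈ S n, ∃ y ∈ S (n + 1), r n x y) :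
    ∃ u : ℕ → α, (∀ n, u n ∈ S n) ∧ ∀ n, r n (u n) (u (n + 1)) := by
  choose! next next_mem next_rel using h
  let u : ℕ → α := fun n => Nat.rec h₀.some next n
  have mem : ∀ n, u n ∈ S n := fun n => by
    induction n with
    | zero => exact h₀.some_mem
    | succ n ih => exact next_mem n _ ih
  exact ⟨u, mem, fun n => next_rel n _ (mem n)⟩

namespace IsCausal

variable {A B : Type*} {δ : ℕ} {T : (ℕ → A) → Set (ℕ → B)}

theorem mono {δ' : ℕ} (hT : IsCausal δ T) (hδ : δ' ≤ δ) : IsCausal δ' T := by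
  intro k f g hfg
  have restrict : (fun (u : ℕ → B) (i : Fin (k + δ')) => u i) =
      (fun (v : Fin (k + δ) → B) (i : Fin (k + δ')) => v (Fin.castLE (by omega) i)) ∘
        (fun (u : ℕ → B) (i : Fin (k + δ)) => u i) := rfl
  rw [restrict, Set.image_comp, Set.image_comp, hT k f g hfg]

theorem exists_mem_cylinder (hT : IsCausal δ T) {f g : ℕ → A} {k : ℕ}
    (hfg : g ∈ cylinder f k) {x : ℕ → B} (hx : x ∈ T f) :
    ∃ y ∈ T g, y ∈ cylinder x (k + δ) := by
  have hx' : (fun (i : Fin (k + δ)) => x i) ∈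
      (fun (u : ℕ → B) (i : Fin (k + δ)) => u i) '' T g := by
    rw [← hT k f g fun i hi => (hfg i hi).symm]
    exact Set.mem_image_of_mem _ hx
  obtain ⟨y, hy, hyx⟩ := hx'
  exact ⟨y, hy, fun i hi => congrFun hyx ⟨i, hi⟩⟩

theorem exists_mem_self [Nonempty A] {T : (ℕ → A) → Set (ℕ → A)} (hT : IsCausal 1 T)
    (hne : ∀ f, (T f).Nonempty) (hclosed : ∀ f, IsClosed (T f)) : ∃ x, x ∈ T x := by
  let S : ℕ → Set (ℕ → A) := fun n => {g | ∃ f ∈ cylinder g n, g ∈ T f}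
  have S_zero : (S 0).Nonempty := by
    obtain ⟨g, hg⟩ := hne (Classical.arbitrary _)
    exact ⟨g, _, by simp, hg⟩
  have S_succ : ∀ n, ∀ g ∈ S n, ∃ y ∈ S (n + 1), y ∈ cylinder g n := by
    rintro n g ⟨f, hfg, hg⟩
    obtain ⟨y, hy, hyg⟩ := hT.exists_mem_cylinder ((mem_cylinder_comm _ _ _).mp hfg) hg
    exact ⟨y, ⟨g, (mem_cylinder_comm _ _ _).mp hyg, hy⟩, cylinder_anti _ n.le_succ hyg⟩
  obtain ⟨u, hu, hu_succ⟩ := exists_seq_of_forall_mem_exists S_zero _ S_succ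
  obtain ⟨x, hx⟩ := exists_forall_mem_cylinder_of_succ u hu_succ
  refine ⟨x, (hclosed x).closure_subset (mem_closure_of_forall_exists_mem_cylinder fun n => ?_)⟩
  obtain ⟨f, hf, hufn⟩ := hu n
  have hxf : x ∈ cylinder f n := by rw [mem_cylinder_iff_eq.mp hf]; exact hx n
  obtain ⟨y, hy, hyu⟩ := hT.exists_mem_cylinder hxf hufn
  refine ⟨y, hy, ?_⟩
  rw [mem_cylinder_iff_eq.mp (hx n)]
  exact cylinder_anti _ n.le_succ hyu

end IsCausal

/-- Every strongly causal multivalued stream transformer with nonempty compact values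
has a fixpoint. -/
theorem strongly_causal_has_fixpoint {A : Type*} [Nonempty A]
    (T : (ℕ → A) → Set (ℕ → A)) (hne : ∀ f, (T f).Nonempty)
    (hcomp : ∀ f, IsCompact (T f)) (δ : ℕ) (hδ : 1 ≤ δ) (hcausal : IsCausal δ T) :
    ∃ fstar : ℕ → A, fstar ∈ T fstar :=
  (hcausal.mono hδ).exists_mem_self hne fun f => (hcomp f).isClosed
end
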